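/- arXiv:1306.0864 — 4 statements merged into one kernel-verified Lean document; each statement's English description precedes it below -/
import Mathlib

section
/- Let G be a finite simple graph and let Ĝ be the graph obtained from G by adding a vertex-disjoint path P on 4 vertices and joining every vertex of G to both endpoints of P. Then the complement of Ĝ is isomorphic to the graph obtained from the complement G̅ of G by the same construction, i.e., (Ĝ)̅ ≅ (G̅)^. -/
open SimpleGraph

/-- The graph `Ĝ`: the disjoint union of `G` with a path `P` on 4 vertices (`0-1-2-3`),
where additionally every vertex of `G` is joined to both endpoints (`0` and `3`) of `P`. -/
def hatGraph {V : Type*} (G : SimpleGraph V) : SimpleGraph (V ⊕ Fin 4) :=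
  SimpleGraph.fromRel fun a b =>
    match a, b with
    | Sum.inl u, Sum.inl v => G.Adj u v
    | Sum.inl _, Sum.inr i => i = 0 ∨ i = 3
    | Sum.inr _, Sum.inl _ => False
    | Sum.inr i, Sum.inr j => (i = 0 ∧ j = 1) ∨ (i = 1 ∧ j = 2) ∨ (i = 2 ∧ j = 3)

def hatPerm : Equiv.Perm (Fin 4) where
  toFun := ![1, 3, 0, 2]
  invFun := ![2, 0, 3, 1]
  left_inv := by decide
  right_inv := by decide

/-- The complement of `Ĝ` is isomorphic to the graph obtained from `Gᶜ` by the same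
construction: `(Ĝ)ᶜ ≅ (Gᶜ)^`. -/
theorem stmt_2 {V : Type*} [Fintype V] (G : SimpleGraph V) :
    Nonempty ((hatGraph G)ᶜ ≃g hatGraph Gᶜ) := by
  refine ⟨⟨Equiv.sumCongr (Equiv.refl V) hatPerm, ?_⟩⟩
  rintro (u | i) (v | j) <;>
    simp only [hatGraph, Equiv.sumCongr_apply, Sum.map_inl, Sum.map_inr, Equiv.refl_apply,
      compl_adj, fromRel_adj, ne_eq, Sum.inl.injEq, Sum.inr.injEq]
  · tauto
  · fin_cases j <;> simp [hatPerm]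
  · fin_cases i <;> simp [hatPerm]
  · fin_cases i <;> fin_cases j <;> simp [hatPerm]
end

section
/- Let G be a finite simple graph and let Ĝ be the graph obtained from G by adding a vertex-disjoint path P on 4 vertices and joining every vertex of G to both endpoints of P. Then for every natural number k, the number of proper k-colorings of Ĝ satisfies P_{Ĝ}(k) = k·(k−1)·( (k−2)·P_G(k−1) + (k·(k−3)+3)·P_G(k−2) ), where P_G(m) denotes the number of proper m-colorings of G. -/
open SimpleGraph

/-- The number of proper `k`-colorings of `G` (the chromatic polynomial evaluated at `k`). -/
noncomputable def numColorings {V : Type*} [Fintype V] (G : SimpleGraph V) (k : ℕ) : ℕ :=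
  Nat.card (G.Coloring (Fin k))
section Aux

variable {V : Type*} [Fintype V] (G : SimpleGraph V)

/-- A function is a proper coloring. -/
def IsProperCol {W α : Type*} (H : SimpleGraph W) (f : W → α) : Prop :=
  ∀ a b, H.Adj a b → f a ≠ f b

/-- Colorings are equivalent to proper functions. -/
def coloringEquivProper {W α : Type*} (H : SimpleGraph W) :
    H.Coloring α ≃ {f : W → α // IsProperCol H f} where
  toFun c := ⟨c, fun _ _ h => c.valid h⟩
  invFun f := Coloring.mk f.1 (fun {a b} h => f.2 a b h)
  left_inv _ := rfl
  right_inv _ := rfl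

lemma numColorings_eq (k : ℕ) :
    numColorings G k = Nat.card {f : V → Fin k // IsProperCol G f} :=
  Nat.card_congr (coloringEquivProper G)

/-- Recoloring along an equivalence of color sets. -/
def properEquivOfEquiv {α β : Type*} (e : α ≃ β) :
    {f : V → α // IsProperCol G f} ≃ {f : V → β // IsProperCol G f} where
  toFun f := ⟨fun v => e (f.1 v), fun a b h hh => f.2 a b h (e.injective hh)⟩
  invFun f := ⟨fun v => e.symm (f.1 v), fun a b h hh => f.2 a b h (e.symm.injective hh)⟩
  left_inv f := by ext v; simp
  right_inv f := by ext v; simp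

/-- Colorings avoiding a set of colors are equivalent to colorings into the complement. -/
def avoidEquiv (k : ℕ) (s : Finset (Fin k)) :
    {f : V → Fin k // IsProperCol G f ∧ ∀ v, f v ∉ s} ≃
      {g : V → {x : Fin k // x ∈ sᶜ} // IsProperCol G g} where
  toFun f := ⟨fun v => ⟨f.1 v, by simp [f.2.2 v]⟩,
    fun a b h hh => f.2.1 a b h (by simpa [Subtype.ext_iff] using hh)⟩
  invFun g := ⟨fun v => (g.1 v).1,
    ⟨fun a b h hh => g.2 a b h (Subtype.ext hh),
      fun v => Finset.mem_compl.mp (g.1 v).2⟩⟩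
  left_inv f := rfl
  right_inv g := by ext v; rfl

lemma card_avoid (k : ℕ) (s : Finset (Fin k)) :
    Nat.card {f : V → Fin k // IsProperCol G f ∧ ∀ v, f v ∉ s} =
      numColorings G (k - s.card) := by
  classical
  have hcard : Fintype.card {x : Fin k // x ∈ sᶜ} = k - s.card := by
    simp [Finset.card_compl]
  have e2 : {x : Fin k // x ∈ sᶜ} ≃ Fin (k - s.card) :=
    Fintype.equivFinOfCardEq hcard
  rw [numColorings_eq]
  exact Nat.card_congr ((avoidEquiv G k s).trans (properEquivOfEquiv G e2))

lemma card_fiber (m : ℕ) (a d : Fin (m + 2)) :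
    Nat.card {f : V → Fin (m + 2) // IsProperCol G f ∧ ∀ v, f v ≠ a ∧ f v ≠ d} =
      if a = d then numColorings G (m + 1) else numColorings G m := by
  classical
  split_ifs with h
  · subst h
    have key := card_avoid G (m + 2) {a}
    have e : Nat.card {f : V → Fin (m + 2) // IsProperCol G f ∧ ∀ v, f v ≠ a ∧ f v ≠ a} =
        Nat.card {f : V → Fin (m + 2) // IsProperCol G f ∧
          ∀ v, f v ∉ ({a} : Finset (Fin (m+2)))} :=
      Nat.card_congr (Equiv.subtypeEquivRight (by intro f; simp))
    rw [e, key]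
    norm_num
  · have key := card_avoid G (m + 2) {a, d}
    have hc : ({a, d} : Finset (Fin (m + 2))).card = 2 := by
      rw [Finset.card_insert_of_notMem (by simpa using h), Finset.card_singleton]
    rw [hc] at key
    have e : Nat.card {f : V → Fin (m + 2) // IsProperCol G f ∧ ∀ v, f v ≠ a ∧ f v ≠ d} =
        Nat.card {f : V → Fin (m + 2) // IsProperCol G f ∧
          ∀ v, f v ∉ ({a, d} : Finset (Fin (m+2)))} :=
      Nat.card_congr (Equiv.subtypeEquivRight (by intro f; simp [not_or]))
    rw [e, key]
    norm_num

/-- The full structure of a coloring of `hatGraph G`. -/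
def hatEquiv (k : ℕ) :
    (hatGraph G).Coloring (Fin k) ≃
      {x : (Fin k × Fin k × Fin k × Fin k) × (V → Fin k) //
        (x.1.1 ≠ x.1.2.1 ∧ x.1.2.1 ≠ x.1.2.2.1 ∧ x.1.2.2.1 ≠ x.1.2.2.2) ∧
        IsProperCol G x.2 ∧ ∀ v, x.2 v ≠ x.1.1 ∧ x.2 v ≠ x.1.2.2.2} where
  toFun c := ⟨((c (Sum.inr 0), c (Sum.inr 1), c (Sum.inr 2), c (Sum.inr 3)),
      fun v => c (Sum.inl v)),
    by
      refine ⟨⟨c.valid ?g1, c.valid ?g2, c.valid ?g3⟩, fun a b h => c.valid ?g4,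
        fun v => ⟨c.valid ?g5, c.valid ?g6⟩⟩
      case g4 =>
        rw [hatGraph, SimpleGraph.fromRel_adj]
        exact ⟨by simpa using h.ne, Or.inl h⟩
      all_goals
        rw [hatGraph, SimpleGraph.fromRel_adj]
        exact ⟨by simp, Or.inl (by simp)⟩⟩
  invFun x := Coloring.mk
      (Sum.elim x.1.2 (![x.1.1.1, x.1.1.2.1, x.1.1.2.2.1, x.1.1.2.2.2]))
      (by
        obtain ⟨⟨⟨a, b, c, d⟩, f⟩, ⟨h01, h12, h23⟩, hf, hav⟩ := x
        rintro u w hadj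
        rw [hatGraph, SimpleGraph.fromRel_adj] at hadj
        obtain ⟨hne, hrel⟩ := hadj
        rcases u with u | i <;> rcases w with w | j
        · simp only [Sum.elim_inl]
          rcases hrel with h | h
          · exact hf u w h
          · exact fun hh => hf w u h hh.symm
        · simp only [Sum.elim_inl, Sum.elim_inr]
          rcases hrel with h | h
          · rcases h with h | h <;> subst h
            · exact (hav u).1
            · exact (hav u).2
          · exact absurd h (by simp)
        · simp only [Sum.elim_inl, Sum.elim_inr]
          rcases hrel with h | h
          · exact absurd h (by simp)
          · rcases h with h | h <;> subst h
            · exact fun hh => (hav w).1 hh.symm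
            · exact fun hh => (hav w).2 hh.symm
        · simp only [Sum.elim_inr]
          rcases hrel with (⟨hi, hj⟩ | ⟨hi, hj⟩ | ⟨hi, hj⟩) | (⟨hi, hj⟩ | ⟨hi, hj⟩ | ⟨hi, hj⟩) <;>
            subst hi <;> subst hj <;>
            simp only [Matrix.cons_val_zero, Matrix.cons_val_one, Matrix.head_cons,
              Matrix.cons_val_two, Matrix.tail_cons, Matrix.cons_val_three]
          exacts [h01, h12, h23, fun hh => h01 hh.symm, fun hh => h12 hh.symm,
            fun hh => h23 hh.symm])
  left_inv c := by
    ext u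
    rcases u with u | i
    · rfl
    · fin_cases i <;> rfl
  right_inv x := rfl

lemma key_sum (m : ℕ) (a c : Fin (m + 2)) (u v : ℕ) :
    (∑ d : Fin (m + 2), if c = d then 0 else if a = d then u else v) =
      if a = c then (m + 1) * v else u + m * v := by
  classical
  have h1 : (∑ d : Fin (m + 2), if c = d then 0 else if a = d then u else v) =
      ∑ d ∈ Finset.univ.erase c, (if a = d then u else v) := by
    rw [← Finset.sum_erase_add Finset.univ (fun d => if c = d then 0 else if a = d then u else v) (Finset.mem_univ c)]
    simp only [if_pos rfl, if_true, add_zero]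
    refine Finset.sum_congr rfl fun d hd => ?_
    rw [if_neg (Finset.ne_of_mem_erase hd).symm]
  rw [h1]
  by_cases hac : a = c
  · subst hac
    rw [if_pos rfl]
    have : ∀ d ∈ Finset.univ.erase a, (if a = d then u else v) = v := by
      intro d hd
      rw [if_neg (Finset.ne_of_mem_erase hd).symm]
    rw [Finset.sum_congr rfl this, Finset.sum_const, Finset.card_erase_of_mem (Finset.mem_univ a)]
    simp [mul_comm]
  · rw [if_neg hac]
    have ha : a ∈ Finset.univ.erase c := Finset.mem_erase.2 ⟨hac, Finset.mem_univ a⟩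
    rw [← Finset.add_sum_erase _ _ ha, if_pos rfl]
    have : ∀ d ∈ (Finset.univ.erase c).erase a, (if a = d then u else v) = v := by
      intro d hd
      rw [if_neg (Finset.ne_of_mem_erase hd).symm]
    rw [Finset.sum_congr rfl this, Finset.sum_const,
      Finset.card_erase_of_mem ha, Finset.card_erase_of_mem (Finset.mem_univ c)]
    simp [mul_comm]

end Aux

section Count

variable {V : Type*} [Fintype V] (G : SimpleGraph V)

lemma main_count (m : ℕ) :
    numColorings (hatGraph G) (m + 2) =
      (m + 2) * ((m + 1) *
        (m * numColorings G (m + 1) + (m * m + m + 1) * numColorings G m)) := by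
  classical
  set N1 := numColorings G (m + 1) with hN1
  set N2 := numColorings G m with hN2
  have step1 : numColorings (hatGraph G) (m + 2) =
      ∑ t : Fin (m+2) × Fin (m+2) × Fin (m+2) × Fin (m+2),
        Nat.card {f : V → Fin (m+2) //
          (t.1 ≠ t.2.1 ∧ t.2.1 ≠ t.2.2.1 ∧ t.2.2.1 ≠ t.2.2.2) ∧
          IsProperCol G f ∧ ∀ v, f v ≠ t.1 ∧ f v ≠ t.2.2.2} := by
    have e := (hatEquiv G (m+2)).trans
      (Equiv.subtypeProdEquivSigmaSubtype
        (fun (t : Fin (m+2) × Fin (m+2) × Fin (m+2) × Fin (m+2)) (f : V → Fin (m+2)) =>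
          (t.1 ≠ t.2.1 ∧ t.2.1 ≠ t.2.2.1 ∧ t.2.2.1 ≠ t.2.2.2) ∧
          IsProperCol G f ∧ ∀ v, f v ≠ t.1 ∧ f v ≠ t.2.2.2))
    rw [show numColorings (hatGraph G) (m+2) = Nat.card (Σ t : Fin (m+2) × Fin (m+2) × Fin (m+2) × Fin (m+2),
        {f : V → Fin (m+2) //
          (t.1 ≠ t.2.1 ∧ t.2.1 ≠ t.2.2.1 ∧ t.2.2.1 ≠ t.2.2.2) ∧
          IsProperCol G f ∧ ∀ v, f v ≠ t.1 ∧ f v ≠ t.2.2.2}) from Nat.card_congr e]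
    rw [Nat.card_eq_fintype_card, Fintype.card_sigma]
    exact Finset.sum_congr rfl fun t _ => (Nat.card_eq_fintype_card).symm
  have fiber : ∀ t : Fin (m+2) × Fin (m+2) × Fin (m+2) × Fin (m+2),
      Nat.card {f : V → Fin (m+2) //
          (t.1 ≠ t.2.1 ∧ t.2.1 ≠ t.2.2.1 ∧ t.2.2.1 ≠ t.2.2.2) ∧
          IsProperCol G f ∧ ∀ v, f v ≠ t.1 ∧ f v ≠ t.2.2.2} =
        if t.1 = t.2.1 then 0 else if t.2.1 = t.2.2.1 then 0 else if t.2.2.1 = t.2.2.2 then 0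
          else (if t.1 = t.2.2.2 then N1 else N2) := by
    intro t
    by_cases hcond : t.1 ≠ t.2.1 ∧ t.2.1 ≠ t.2.2.1 ∧ t.2.2.1 ≠ t.2.2.2
    · rw [if_neg hcond.1, if_neg hcond.2.1, if_neg hcond.2.2]
      rw [show Nat.card {f : V → Fin (m+2) //
          (t.1 ≠ t.2.1 ∧ t.2.1 ≠ t.2.2.1 ∧ t.2.2.1 ≠ t.2.2.2) ∧
          IsProperCol G f ∧ ∀ v, f v ≠ t.1 ∧ f v ≠ t.2.2.2} =
        Nat.card {f : V → Fin (m+2) // IsProperCol G f ∧ ∀ v, f v ≠ t.1 ∧ f v ≠ t.2.2.2} from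
        Nat.card_congr (Equiv.subtypeEquivRight (fun f => by tauto))]
      exact card_fiber G m t.1 t.2.2.2
    · have he : IsEmpty {f : V → Fin (m+2) //
          (t.1 ≠ t.2.1 ∧ t.2.1 ≠ t.2.2.1 ∧ t.2.2.1 ≠ t.2.2.2) ∧
          IsProperCol G f ∧ ∀ v, f v ≠ t.1 ∧ f v ≠ t.2.2.2} :=
        ⟨fun f => hcond f.2.1⟩
      rw [Nat.card_of_isEmpty]
      split_ifs <;> tauto
  rw [step1, Finset.sum_congr rfl fun t _ => fiber t]
  rw [Fintype.sum_prod_type]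
  have L1 : ∀ a b c : Fin (m+2),
      (∑ d : Fin (m+2), if a = b then 0 else if b = c then 0 else if c = d then 0
          else (if a = d then N1 else N2)) =
        if a = b then 0 else if b = c then 0
          else (if a = c then (m+1) * N2 else N1 + m * N2) := by
    intro a b c
    by_cases h1 : a = b
    · simp [h1]
    by_cases h2 : b = c
    · simp [h1, h2]
    simp only [if_neg h1, if_neg h2]
    exact key_sum m a c N1 N2
  have L2 : ∀ a b : Fin (m+2),
      (∑ c : Fin (m+2), if a = b then 0 else if b = c then 0
          else (if a = c then (m+1) * N2 else N1 + m * N2)) =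
        if a = b then 0 else ((m+1) * N2 + m * (N1 + m * N2)) := by
    intro a b
    by_cases h1 : a = b
    · simp [h1]
    simp only [if_neg h1]
    rw [key_sum m a b ((m+1) * N2) (N1 + m * N2), if_neg h1]
  have L3 : (∑ a : Fin (m+2), ∑ b : Fin (m+2),
        if a = b then 0 else ((m+1) * N2 + m * (N1 + m * N2))) =
      (m + 2) * ((m + 1) * ((m+1) * N2 + m * (N1 + m * N2))) := by
    have hb : ∀ a : Fin (m+2),
        (∑ b : Fin (m+2), if a = b then 0 else ((m+1) * N2 + m * (N1 + m * N2))) =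
        (m + 1) * ((m+1) * N2 + m * (N1 + m * N2)) := by
      intro a
      have := key_sum m a a ((m+1) * N2 + m * (N1 + m * N2)) ((m+1) * N2 + m * (N1 + m * N2))
      simp only [ite_self, if_pos rfl] at this
      exact this
    rw [Finset.sum_congr rfl fun a _ => hb a, Finset.sum_const]
    simp [mul_comm]
  calc (∑ a : Fin (m+2), ∑ bcd : Fin (m+2) × Fin (m+2) × Fin (m+2),
          if a = bcd.1 then 0 else if bcd.1 = bcd.2.1 then 0 else if bcd.2.1 = bcd.2.2 then 0
            else (if a = bcd.2.2 then N1 else N2))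
      = ∑ a : Fin (m+2), ∑ b : Fin (m+2), ∑ c : Fin (m+2), ∑ d : Fin (m+2),
          (if a = b then 0 else if b = c then 0 else if c = d then 0
            else (if a = d then N1 else N2)) := by
        refine Finset.sum_congr rfl fun a _ => ?_
        rw [Fintype.sum_prod_type]
        refine Finset.sum_congr rfl fun b _ => ?_
        rw [Fintype.sum_prod_type]
    _ = (m + 2) * ((m + 1) * ((m+1) * N2 + m * (N1 + m * N2))) := by
        rw [Finset.sum_congr rfl fun a _ => Finset.sum_congr rfl fun b _ =>
          Finset.sum_congr rfl fun c _ => L1 a b c]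
        rw [Finset.sum_congr rfl fun a _ => Finset.sum_congr rfl fun b _ => L2 a b]
        exact L3
    _ = (m + 2) * ((m + 1) * (m * N1 + (m * m + m + 1) * N2)) := by ring

lemma hat_zero : numColorings (hatGraph G) 0 = 0 := by
  have : IsEmpty ((hatGraph G).Coloring (Fin 0)) := ⟨fun c => (c (Sum.inr 0)).elim0⟩
  exact Nat.card_of_isEmpty

lemma hat_one : numColorings (hatGraph G) 1 = 0 := by
  have hadj : (hatGraph G).Adj (Sum.inr 0) (Sum.inr 1) := by
    rw [hatGraph, SimpleGraph.fromRel_adj]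
    exact ⟨by simp, Or.inl (by simp)⟩
  have : IsEmpty ((hatGraph G).Coloring (Fin 1)) :=
    ⟨fun c => (c.valid hadj) (Subsingleton.elim _ _)⟩
  exact Nat.card_of_isEmpty

end Count

/-- The chromatic polynomial of `Ĝ` satisfies
`P_Ĝ(k) = k(k−1)((k−2)·P_G(k−1) + (k(k−3)+3)·P_G(k−2))`. -/
theorem stmt_3 {V : Type*} [Fintype V] (G : SimpleGraph V) (k : ℕ) :
    (numColorings (hatGraph G) k : ℤ) =
      (k : ℤ) * ((k : ℤ) - 1) *
        (((k : ℤ) - 2) * (numColorings G (k - 1) : ℤ) +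
          ((k : ℤ) * ((k : ℤ) - 3) + 3) * (numColorings G (k - 2) : ℤ)) := by
  match k with
  | 0 => rw [hat_zero]; norm_num
  | 1 => rw [hat_one]; norm_num
  | (m + 2) =>
    rw [main_count G m]
    have h1 : m + 2 - 1 = m + 1 := by omega
    have h2 : m + 2 - 2 = m := by omega
    rw [h1, h2]
    push_cast
    ring
end

section
/- Let G and H be finite simple graphs with s(G) = s(H). Then s(Ĝ) = s(Ĥ), where Ĝ and Ĥ are obtained from G and H respectively by adding a vertex-disjoint path on 4 vertices and joining every original vertex to both endpoints of the path. -/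
open SimpleGraph

open scoped Classical

/-- The multiset of orders of the connected components of a graph. -/

noncomputable def componentOrders {V : Type*} [Fintype V] (G' : SimpleGraph V) : Multiset ℕ :=
  ((Finset.univ.val.map fun v => G'.connectedComponentMk v).dedup).map fun c => Nat.card c.supp

/-- The subgraph sequence `s(G)`: the multiset, over all edge subsets `F ⊆ E(G)`, of the
subgraph descriptions `(|F|, multiset of orders of connected components of (V, F))`. -/

noncomputable def subgraphSeq {V : Type*} [Fintype V] (G : SimpleGraph V) :
    Multiset (ℕ × Multiset ℕ) :=
  G.edgeFinset.powerset.val.map fun (F : Finset (Sym2 V)) =>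
    (F.card, componentOrders (SimpleGraph.fromEdgeSet (F : Set (Sym2 V))))

/-! ### Auxiliary machinery -/

open Finset

section Aux

variable {V : Type*} {W : Type*}

lemma univ_val_map_equiv {α β : Type*} [Fintype α] [Fintype β] (e : α ≃ β) :
    (Finset.univ : Finset α).val.map e = (Finset.univ : Finset β).val := by
  have h2 := congrArg Finset.val (Finset.map_univ_equiv e)
  rw [Finset.map_val] at h2
  simpa using h2

lemma reach_transfer {G1 : SimpleGraph V} {G2 : SimpleGraph W} (f : V → W)
    (h : ∀ a b, G1.Adj a b → G2.Reachable (f a) (f b)) {x y : V} (hr : G1.Reachable x y) :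
    G2.Reachable (f x) (f y) := by
  obtain ⟨w⟩ := hr
  induction w with
  | nil => exact Reachable.refl _
  | cons ha _ ih => exact (h _ _ ha).trans ih

lemma mk_surj (G' : SimpleGraph V) : Function.Surjective G'.connectedComponentMk :=
  fun c => c.exists_rep

lemma componentOrders_eq [Fintype V] (G' : SimpleGraph V) :
    componentOrders G' =
      (Finset.univ : Finset G'.ConnectedComponent).val.map fun c => Nat.card c.supp := by
  unfold componentOrders
  congr 1
  rw [← Finset.image_val, Finset.image_univ_of_surjective (mk_surj G')]

/-- Build a component equivalence from a reachability-preserving vertex equivalence. -/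
noncomputable def ccEquiv {G1 : SimpleGraph V} {G2 : SimpleGraph W}
    (β : V ≃ W) (hβ : ∀ x y, G1.Reachable x y ↔ G2.Reachable (β x) (β y)) :
    G1.ConnectedComponent ≃ G2.ConnectedComponent where
  toFun := Quot.lift (fun v => G2.connectedComponentMk (β v))
    (fun a b hab => ConnectedComponent.eq.2 ((hβ a b).1 hab))
  invFun := Quot.lift (fun w => G1.connectedComponentMk (β.symm w))
    (fun a b hab => by
      refine ConnectedComponent.eq.2 ((hβ _ _).2 ?_)
      simpa using hab)
  left_inv := by
    refine Quot.ind fun v => ?_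
    show G1.connectedComponentMk (β.symm (β v)) = _
    rw [Equiv.symm_apply_apply]
    rfl
  right_inv := by
    refine Quot.ind fun w => ?_
    show G2.connectedComponentMk (β (β.symm w)) = _
    rw [Equiv.apply_symm_apply]
    rfl

lemma componentOrders_congr [Fintype V] [Fintype W] {G1 : SimpleGraph V} {G2 : SimpleGraph W}
    (β : V ≃ W) (hβ : ∀ x y, G1.Reachable x y ↔ G2.Reachable (β x) (β y)) :
    componentOrders G1 = componentOrders G2 := by
  rw [componentOrders_eq, componentOrders_eq]
  have hsupp : ∀ c : G1.ConnectedComponent,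
      Nat.card c.supp = Nat.card ((ccEquiv β hβ) c).supp := by
    intro c
    refine Nat.card_congr (Equiv.subtypeEquiv β ?_)
    intro a
    induction c using Quot.ind with
    | _ v =>
      simp only [ConnectedComponent.mem_supp_iff]
      constructor
      · intro h; rw [← h]; rfl
      · intro h
        have : G2.connectedComponentMk (β a) = G2.connectedComponentMk (β v) := h
        exact ConnectedComponent.eq.2 ((hβ a v).2 (ConnectedComponent.eq.1 this))
  calc (Finset.univ : Finset G1.ConnectedComponent).val.map (fun c => Nat.card c.supp)
      = (Finset.univ : Finset G1.ConnectedComponent).val.map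
          ((fun c => Nat.card c.supp) ∘ (ccEquiv β hβ)) := by
        refine Multiset.map_congr rfl ?_
        intro c _; exact hsupp c
    _ = ((Finset.univ : Finset G1.ConnectedComponent).val.map (ccEquiv β hβ)).map
          (fun c => Nat.card c.supp) := by rw [Multiset.map_map]
    _ = (Finset.univ : Finset G2.ConnectedComponent).val.map (fun c => Nat.card c.supp) := by
        rw [univ_val_map_equiv (ccEquiv β hβ)]

/-- From equal fiber-count functions over two fintypes, build an equivalence matching fibers. -/
noncomputable def fiberMatch {A B : Type*} [Fintype A] [Fintype B] (f : A → ℕ) (g : B → ℕ)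
    (h : ∀ n, Fintype.card {a // f a = n} = Fintype.card {b // g b = n}) : A ≃ B :=
  (Equiv.sigmaFiberEquiv f).symm.trans
    ((Equiv.sigmaCongr (Equiv.refl ℕ) (fun n => Fintype.equivOfCardEq (h n))).trans
      (Equiv.sigmaFiberEquiv g))

lemma fiberMatch_prop {A B : Type*} [Fintype A] [Fintype B] (f : A → ℕ) (g : B → ℕ)
    (h : ∀ n, Fintype.card {a // f a = n} = Fintype.card {b // g b = n}) (a : A) :
    g (fiberMatch f g h a) = f a := by
  show g ((Fintype.equivOfCardEq (h (f a)) ⟨a, rfl⟩ : {b // g b = f a}) : B) = f a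
  exact (Fintype.equivOfCardEq (h (f a)) ⟨a, rfl⟩).2

lemma card_fiber_eq_of_map_eq {A B : Type*} [Fintype A] [Fintype B] (f : A → ℕ) (g : B → ℕ)
    (h : (Finset.univ : Finset A).val.map f = (Finset.univ : Finset B).val.map g) :
    ∀ n, Fintype.card {a // f a = n} = Fintype.card {b // g b = n} := by
  intro n
  have h1 := congrArg (Multiset.count n) h
  rw [Multiset.count_map, Multiset.count_map] at h1
  rw [Fintype.card_subtype, Fintype.card_subtype]
  simpa [Finset.filter, eq_comm] using h1

lemma exists_beta [Fintype V] [Fintype W] {G1 : SimpleGraph V} {G2 : SimpleGraph W}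
    (h : componentOrders G1 = componentOrders G2) :
    ∃ β : V ≃ W, ∀ x y, G1.Reachable x y ↔ G2.Reachable (β x) (β y) := by
  rw [componentOrders_eq, componentOrders_eq] at h
  have hfib := card_fiber_eq_of_map_eq (fun c : G1.ConnectedComponent => Nat.card c.supp)
    (fun c : G2.ConnectedComponent => Nat.card c.supp) h
  set γ := fiberMatch _ _ hfib with hγdef
  have hγ : ∀ c : G1.ConnectedComponent, Nat.card (γ c).supp = Nat.card c.supp :=
    fiberMatch_prop _ _ hfib
  have hv : ∀ c : G1.ConnectedComponent,
      Fintype.card {v // G1.connectedComponentMk v = c}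
        = Fintype.card {w // G2.connectedComponentMk w = γ c} := by
    intro c
    have e1 : Fintype.card {v // G1.connectedComponentMk v = c} = Nat.card c.supp := by
      rw [Nat.card_eq_fintype_card]
      exact Fintype.card_congr (Equiv.subtypeEquivRight (by
        intro v; rw [ConnectedComponent.mem_supp_iff])).symm
    have e2 : Fintype.card {w // G2.connectedComponentMk w = γ c} = Nat.card (γ c).supp := by
      rw [Nat.card_eq_fintype_card]
      exact Fintype.card_congr (Equiv.subtypeEquivRight (by
        intro w; rw [ConnectedComponent.mem_supp_iff])).symm
    rw [e1, e2, hγ]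
  let β : V ≃ W := (Equiv.sigmaFiberEquiv G1.connectedComponentMk).symm.trans
    ((Equiv.sigmaCongr γ (fun c => Fintype.equivOfCardEq (hv c))).trans
      (Equiv.sigmaFiberEquiv G2.connectedComponentMk))
  have hβmk : ∀ v, G2.connectedComponentMk (β v) = γ (G1.connectedComponentMk v) := by
    intro v
    show G2.connectedComponentMk
      ((Fintype.equivOfCardEq (hv (G1.connectedComponentMk v)) ⟨v, rfl⟩ :
        {w // G2.connectedComponentMk w = γ (G1.connectedComponentMk v)}) : W) = _
    exact (Fintype.equivOfCardEq (hv (G1.connectedComponentMk v)) ⟨v, rfl⟩).2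
  refine ⟨β, fun x y => ?_⟩
  rw [← ConnectedComponent.eq, ← ConnectedComponent.eq, hβmk, hβmk]
  exact ⟨fun hxy => by rw [hxy], fun hxy => γ.injective hxy⟩

/-! ### The edge encoding of the hat graph -/

def geV : Sym2 V → Sym2 (V ⊕ Fin 4) := Sym2.map Sum.inl
def jeV (p : V × Bool) : Sym2 (V ⊕ Fin 4) :=
  s(Sum.inl p.1, Sum.inr (if p.2 then (3 : Fin 4) else 0))
def peV (i : Fin 3) : Sym2 (V ⊕ Fin 4) := s(Sum.inr i.castSucc, Sum.inr i.succ)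

noncomputable def enc (F : Finset (Sym2 V)) (J : Finset (V × Bool)) (P : Finset (Fin 3)) :
    Finset (Sym2 (V ⊕ Fin 4)) := F.image geV ∪ J.image jeV ∪ P.image peV

lemma geV_inj : Function.Injective (geV (V := V)) :=
  Sym2.map.injective Sum.inl_injective

lemma jeV_inj : Function.Injective (jeV (V := V)) := by
  rintro ⟨v, b⟩ ⟨v', b'⟩ h
  simp only [jeV, Sym2.eq_iff] at h
  rcases h with ⟨h1, h2⟩ | ⟨h1, h2⟩
  · obtain rfl := Sum.inl_injective h1
    have := Sum.inr_injective h2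
    cases b <;> cases b' <;> simp_all
  · exact absurd h1 (by simp)

lemma peV_inj : Function.Injective (peV (V := V)) := by
  intro i j h
  simp only [peV, Sym2.eq_iff] at h
  rcases h with ⟨h1, h2⟩ | ⟨h1, h2⟩
  · have := Sum.inr_injective h1
    exact Fin.castSucc_injective _ this
  · have a1 := congrArg Fin.val (Sum.inr_injective h1)
    have a2 := congrArg Fin.val (Sum.inr_injective h2)
    simp only [Fin.coe_castSucc, Fin.val_succ] at a1 a2
    exact Fin.ext (by omega)

lemma geV_ne_jeV (e : Sym2 V) (p : V × Bool) : geV e ≠ jeV p := by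
  induction e using Sym2.ind with
  | _ x y =>
    simp only [geV, jeV, Sym2.map_pair_eq, ne_eq, Sym2.eq_iff]
    rintro (⟨-, h⟩ | ⟨h, -⟩) <;> simp at h

lemma geV_ne_peV (e : Sym2 V) (i : Fin 3) : geV e ≠ peV i := by
  induction e using Sym2.ind with
  | _ x y =>
    simp only [geV, peV, Sym2.map_pair_eq, ne_eq, Sym2.eq_iff]
    rintro (⟨h, -⟩ | ⟨h, -⟩) <;> simp at h

lemma jeV_ne_peV (p : V × Bool) (i : Fin 3) : jeV p ≠ peV i := by
  simp only [jeV, peV, ne_eq, Sym2.eq_iff]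
  rintro (⟨h, -⟩ | ⟨h, -⟩) <;> simp at h

lemma geV_mem_enc {F : Finset (Sym2 V)} {J P} (e : Sym2 V) :
    geV e ∈ enc F J P ↔ e ∈ F := by
  simp only [enc, Finset.mem_union, Finset.mem_image]
  constructor
  · rintro ((⟨f, hf, hfe⟩ | ⟨p, hp, hpe⟩) | ⟨i, hi, hie⟩)
    · rwa [← geV_inj hfe]
    · exact absurd hpe.symm (geV_ne_jeV e p)
    · exact absurd hie.symm (geV_ne_peV e i)
  · intro he; exact Or.inl (Or.inl ⟨e, he, rfl⟩)

lemma jeV_mem_enc {F : Finset (Sym2 V)} {J P} (p : V × Bool) :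
    jeV p ∈ enc F J P ↔ p ∈ J := by
  simp only [enc, Finset.mem_union, Finset.mem_image]
  constructor
  · rintro ((⟨f, hf, hfe⟩ | ⟨q, hq, hqe⟩) | ⟨i, hi, hie⟩)
    · exact absurd hfe (geV_ne_jeV f p)
    · rwa [← jeV_inj hqe]
    · exact absurd hie.symm (jeV_ne_peV p i)
  · intro he; exact Or.inl (Or.inr ⟨p, he, rfl⟩)

lemma peV_mem_enc {F : Finset (Sym2 V)} {J P} (i : Fin 3) :
    peV i ∈ enc F J P ↔ i ∈ P := by
  simp only [enc, Finset.mem_union, Finset.mem_image]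
  constructor
  · rintro ((⟨f, hf, hfe⟩ | ⟨q, hq, hqe⟩) | ⟨j, hj, hje⟩)
    · exact absurd hfe (geV_ne_peV f i)
    · exact absurd hqe (jeV_ne_peV q i)
    · rwa [← peV_inj hje]
  · intro he; exact Or.inr ⟨i, he, rfl⟩

lemma card_enc (F : Finset (Sym2 V)) (J : Finset (V × Bool)) (P : Finset (Fin 3)) :
    (enc F J P).card = F.card + J.card + P.card := by
  unfold enc
  rw [Finset.card_union_of_disjoint, Finset.card_union_of_disjoint,
    Finset.card_image_of_injective _ geV_inj, Finset.card_image_of_injective _ jeV_inj,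
    Finset.card_image_of_injective _ peV_inj]
  · simp only [Finset.disjoint_left, Finset.mem_image]
    rintro e ⟨f, -, rfl⟩ ⟨p, -, hpe⟩
    exact geV_ne_jeV f p hpe.symm
  · simp only [Finset.disjoint_left, Finset.mem_union, Finset.mem_image]
    rintro e (⟨f, -, rfl⟩ | ⟨p, -, rfl⟩) ⟨i, -, hie⟩
    · exact geV_ne_peV f i hie.symm
    · exact jeV_ne_peV p i hie.symm

lemma mem_enc_iff {F : Finset (Sym2 V)} {J P} (e : Sym2 (V ⊕ Fin 4)) :
    e ∈ enc F J P ↔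
      (∃ f ∈ F, geV f = e) ∨ (∃ p ∈ J, jeV p = e) ∨ (∃ i ∈ P, peV i = e) := by
  simp [enc, Finset.mem_union, Finset.mem_image, or_assoc]

lemma enc_inj_parts {F F' : Finset (Sym2 V)} {J J' P P'}
    (h : enc F J P = enc F' J' P') : F = F' ∧ J = J' ∧ P = P' := by
  refine ⟨?_, ?_, ?_⟩
  · ext f; rw [← geV_mem_enc (J := J) (P := P) f, h, geV_mem_enc]
  · ext p; rw [← jeV_mem_enc (F := F) (P := P) p, h, jeV_mem_enc]
  · ext i; rw [← peV_mem_enc (F := F) (J := J) i, h, peV_mem_enc]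

lemma geV_mem_hat [Fintype V] {G : SimpleGraph V} {f : Sym2 V} (hf : f ∈ G.edgeFinset) :
    geV f ∈ (hatGraph G).edgeFinset := by
  induction f using Sym2.ind with
  | _ x y =>
    rw [mem_edgeFinset, mem_edgeSet] at hf
    rw [geV, Sym2.map_pair_eq, mem_edgeFinset, mem_edgeSet, hatGraph, fromRel_adj]
    exact ⟨by simp [hf.ne], Or.inl hf⟩

lemma jeV_mem_hat [Fintype V] {G : SimpleGraph V} (p : V × Bool) :
    jeV p ∈ (hatGraph G).edgeFinset := by
  rw [jeV, mem_edgeFinset, mem_edgeSet, hatGraph, fromRel_adj]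
  refine ⟨by simp, Or.inl ?_⟩
  show (if p.2 then (3 : Fin 4) else 0) = 0 ∨ (if p.2 then (3 : Fin 4) else 0) = 3
  cases hb : p.2 <;> simp

lemma peV_mem_hat [Fintype V] {G : SimpleGraph V} (i : Fin 3) :
    peV i ∈ (hatGraph G).edgeFinset := by
  rw [peV, mem_edgeFinset, mem_edgeSet, hatGraph, fromRel_adj]
  refine ⟨by simp [Fin.ext_iff, Fin.val_succ], Or.inl ?_⟩
  show (i.castSucc = 0 ∧ i.succ = 1) ∨ (i.castSucc = 1 ∧ i.succ = 2) ∨ (i.castSucc = 2 ∧ i.succ = 3)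
  fin_cases i <;> decide

lemma hat_edge_shape [Fintype V] {G : SimpleGraph V} {e : Sym2 (V ⊕ Fin 4)}
    (he : e ∈ (hatGraph G).edgeFinset) :
    (∃ f ∈ G.edgeFinset, geV f = e) ∨ (∃ p : V × Bool, jeV p = e) ∨ (∃ i : Fin 3, peV i = e) := by
  induction e using Sym2.ind with
  | _ a b =>
    rw [mem_edgeFinset, mem_edgeSet, hatGraph, fromRel_adj] at he
    obtain ⟨hne, hrel⟩ := he
    cases a with
    | inl u =>
      cases b with
      | inl v =>
        have hadj : G.Adj u v := by
          rcases hrel with h | h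
          · exact h
          · exact (h : G.Adj v u).symm
        exact Or.inl ⟨s(u, v), by rwa [mem_edgeFinset, mem_edgeSet],
          by rw [geV, Sym2.map_pair_eq]⟩
      | inr i =>
        have h03 : i = 0 ∨ i = 3 := by
          rcases hrel with h | h
          · exact h
          · exact (h : False).elim
        refine Or.inr (Or.inl ?_)
        rcases h03 with rfl | rfl
        · exact ⟨(u, false), rfl⟩
        · exact ⟨(u, true), rfl⟩
    | inr i =>
      cases b with
      | inl v =>
        have h03 : i = 0 ∨ i = 3 := by
          rcases hrel with h | h
          · exact (h : False).elim
          · exact h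
        refine Or.inr (Or.inl ?_)
        rcases h03 with rfl | rfl
        · exact ⟨(v, false), Sym2.eq_swap⟩
        · exact ⟨(v, true), Sym2.eq_swap⟩
      | inr j =>
        refine Or.inr (Or.inr ?_)
        have hc : (i = 0 ∧ j = 1) ∨ (i = 1 ∧ j = 2) ∨ (i = 2 ∧ j = 3) ∨
            (j = 0 ∧ i = 1) ∨ (j = 1 ∧ i = 2) ∨ (j = 2 ∧ i = 3) := by
          rcases hrel with h | h
          · have h' : (i = 0 ∧ j = 1) ∨ (i = 1 ∧ j = 2) ∨ (i = 2 ∧ j = 3) := h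
            tauto
          · have h' : (j = 0 ∧ i = 1) ∨ (j = 1 ∧ i = 2) ∨ (j = 2 ∧ i = 3) := h
            tauto
        rcases hc with ⟨rfl, rfl⟩ | ⟨rfl, rfl⟩ | ⟨rfl, rfl⟩ | ⟨rfl, rfl⟩ | ⟨rfl, rfl⟩ | ⟨rfl, rfl⟩
        · exact ⟨0, rfl⟩
        · exact ⟨1, rfl⟩
        · exact ⟨2, rfl⟩
        · exact ⟨0, Sym2.eq_swap⟩
        · exact ⟨1, Sym2.eq_swap⟩
        · exact ⟨2, Sym2.eq_swap⟩

lemma image_encFn [Fintype V] (G : SimpleGraph V) :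
    Finset.image (fun q : Finset (Sym2 V) × (Finset (V × Bool) × Finset (Fin 3)) =>
        enc q.1 q.2.1 q.2.2)
      (G.edgeFinset.powerset ×ˢ (Finset.univ : Finset (Finset (V × Bool) × Finset (Fin 3))))
    = (hatGraph G).edgeFinset.powerset := by
  ext S
  simp only [Finset.mem_image, Finset.mem_powerset, Finset.mem_product]
  constructor
  · rintro ⟨⟨F, J, P⟩, ⟨hF, -⟩, rfl⟩
    intro e he
    rcases (mem_enc_iff e).1 he with ⟨f, hf, rfl⟩ | ⟨p, -, rfl⟩ | ⟨i, -, rfl⟩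
    · exact geV_mem_hat (hF hf)
    · exact jeV_mem_hat p
    · exact peV_mem_hat i
  · intro hS
    refine ⟨(G.edgeFinset.filter (fun f => geV f ∈ S),
      Finset.univ.filter (fun p => jeV p ∈ S), Finset.univ.filter (fun i => peV i ∈ S)),
      ⟨Finset.filter_subset _ _, by simp⟩, ?_⟩
    ext e
    rw [mem_enc_iff]
    constructor
    · rintro (⟨f, hf, rfl⟩ | ⟨p, hp, rfl⟩ | ⟨i, hi, rfl⟩)
      · exact (Finset.mem_filter.1 hf).2
      · exact (Finset.mem_filter.1 hp).2
      · exact (Finset.mem_filter.1 hi).2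
    · intro he
      rcases hat_edge_shape (hS he) with ⟨f, hf, rfl⟩ | ⟨p, rfl⟩ | ⟨i, rfl⟩
      · exact Or.inl ⟨f, Finset.mem_filter.2 ⟨hf, he⟩, rfl⟩
      · exact Or.inr (Or.inl ⟨p, Finset.mem_filter.2 ⟨Finset.mem_univ _, he⟩, rfl⟩)
      · exact Or.inr (Or.inr ⟨i, Finset.mem_filter.2 ⟨Finset.mem_univ _, he⟩, rfl⟩)

lemma pow_hat_map [Fintype V] (G : SimpleGraph V) (d : Finset (Sym2 (V ⊕ Fin 4)) → ℕ × Multiset ℕ) :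
    (hatGraph G).edgeFinset.powerset.val.map d
      = (G.edgeFinset.powerset ×ˢ
          (Finset.univ : Finset (Finset (V × Bool) × Finset (Fin 3)))).val.map
        (fun q => d (enc q.1 q.2.1 q.2.2)) := by
  have hinj : Function.Injective
      (fun q : Finset (Sym2 V) × (Finset (V × Bool) × Finset (Fin 3)) =>
        enc q.1 q.2.1 q.2.2) := by
    rintro ⟨F, J, P⟩ ⟨F', J', P'⟩ h
    obtain ⟨h1, h2, h3⟩ := enc_inj_parts h
    simp_all
  rw [← image_encFn G, Finset.image_val_of_injOn (hinj.injOn), Multiset.map_map]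
  rfl

/-! ### Transfer along a reachability-preserving equivalence -/

lemma enc_reach_step {F : Finset (Sym2 V)} {F' : Finset (Sym2 W)} (β : V ≃ W)
    (hβ : ∀ x y, (SimpleGraph.fromEdgeSet (F : Set (Sym2 V))).Reachable x y →
      (SimpleGraph.fromEdgeSet (F' : Set (Sym2 W))).Reachable (β x) (β y))
    (J : Finset (V × Bool)) (P : Finset (Fin 3)) (a b : V ⊕ Fin 4)
    (hadj : (SimpleGraph.fromEdgeSet ((enc F J P : Finset (Sym2 (V ⊕ Fin 4))) :
        Set (Sym2 (V ⊕ Fin 4)))).Adj a b) :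
    (SimpleGraph.fromEdgeSet ((enc F' (J.image (Prod.map β id)) P : Finset (Sym2 (W ⊕ Fin 4))) :
        Set (Sym2 (W ⊕ Fin 4)))).Reachable (Sum.map β id a) (Sum.map β id b) := by
  rw [fromEdgeSet_adj] at hadj
  obtain ⟨hmem, hne⟩ := hadj
  rw [Finset.mem_coe, mem_enc_iff] at hmem
  have key : ∀ u v : V, s(u, v) ∈ F →
      (SimpleGraph.fromEdgeSet ((enc F' (J.image (Prod.map β id)) P : Finset _) :
        Set (Sym2 (W ⊕ Fin 4)))).Reachable (Sum.inl (β u)) (Sum.inl (β v)) := by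
    intro u v huv
    by_cases huv' : u = v
    · subst huv'; exact Reachable.refl _
    · have h1 : (SimpleGraph.fromEdgeSet (F : Set (Sym2 V))).Adj u v := by
        rw [fromEdgeSet_adj]; exact ⟨Finset.mem_coe.2 huv, huv'⟩
      have h2 := hβ u v h1.reachable
      refine reach_transfer Sum.inl ?_ h2
      intro x y hxy
      rw [fromEdgeSet_adj] at hxy
      have hadj2 : (SimpleGraph.fromEdgeSet ((enc F' (J.image (Prod.map β id)) P : Finset _) :
          Set (Sym2 (W ⊕ Fin 4)))).Adj (Sum.inl x) (Sum.inl y) := by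
        rw [fromEdgeSet_adj]
        refine ⟨?_, by simp [hxy.2]⟩
        rw [show s(Sum.inl x, Sum.inl y) = geV s(x, y) from (Sym2.map_pair_eq _ _ _).symm]
        exact Finset.mem_coe.2 ((geV_mem_enc _).2 (Finset.mem_coe.1 hxy.1))
      exact hadj2.reachable
  rcases hmem with ⟨f, hf, hfe⟩ | ⟨p, hp, hpe⟩ | ⟨i, hi, hie⟩
  · induction f using Sym2.ind with
    | _ x y =>
      rw [geV, Sym2.map_pair_eq, Sym2.eq_iff] at hfe
      rcases hfe with ⟨rfl, rfl⟩ | ⟨rfl, rfl⟩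
      · exact key x y hf
      · exact (key x y hf).symm
  · obtain ⟨v, bb⟩ := p
    have hadj2 : (SimpleGraph.fromEdgeSet ((enc F' (J.image (Prod.map β id)) P : Finset _) :
        Set (Sym2 (W ⊕ Fin 4)))).Adj (Sum.inl (β v)) (Sum.inr (if bb then (3 : Fin 4) else 0)) := by
      rw [fromEdgeSet_adj]
      refine ⟨?_, by simp⟩
      refine Finset.mem_coe.2 ((jeV_mem_enc ((β v, bb) : W × Bool)).2 ?_)
      exact Finset.mem_image.2 ⟨(v, bb), hp, rfl⟩
    rw [jeV, Sym2.eq_iff] at hpe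
    rcases hpe with ⟨ha, hb⟩ | ⟨ha, hb⟩
    · rw [← ha, ← hb]
      exact hadj2.reachable
    · rw [← ha, ← hb]
      exact hadj2.reachable.symm
  · have hadj2 : (SimpleGraph.fromEdgeSet ((enc F' (J.image (Prod.map β id)) P : Finset _) :
        Set (Sym2 (W ⊕ Fin 4)))).Adj (Sum.inr i.castSucc) (Sum.inr i.succ) := by
      rw [fromEdgeSet_adj]
      refine ⟨Finset.mem_coe.2 ((peV_mem_enc i).2 hi), ?_⟩
      simp only [ne_eq, Sum.inr.injEq]
      intro hh
      have := congrArg Fin.val hh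
      simp only [Fin.coe_castSucc, Fin.val_succ] at this
      omega
    rw [peV, Sym2.eq_iff] at hie
    rcases hie with ⟨ha, hb⟩ | ⟨ha, hb⟩
    · rw [← ha, ← hb]
      exact hadj2.reachable
    · rw [← ha, ← hb]
      exact hadj2.reachable.symm

lemma enc_reach {F : Finset (Sym2 V)} {F' : Finset (Sym2 W)} (β : V ≃ W)
    (hβ : ∀ x y, (SimpleGraph.fromEdgeSet (F : Set (Sym2 V))).Reachable x y →
      (SimpleGraph.fromEdgeSet (F' : Set (Sym2 W))).Reachable (β x) (β y))
    (J : Finset (V × Bool)) (P : Finset (Fin 3)) (x y : V ⊕ Fin 4)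
    (hr : (SimpleGraph.fromEdgeSet ((enc F J P : Finset (Sym2 (V ⊕ Fin 4))) :
        Set (Sym2 (V ⊕ Fin 4)))).Reachable x y) :
    (SimpleGraph.fromEdgeSet ((enc F' (J.image (Prod.map β id)) P : Finset (Sym2 (W ⊕ Fin 4))) :
        Set (Sym2 (W ⊕ Fin 4)))).Reachable (Sum.map β id x) (Sum.map β id y) :=
  reach_transfer (Sum.map β id) (fun a b hab => enc_reach_step β hβ J P a b hab) hr

lemma desc_enc_transfer [Fintype V] [Fintype W] {F : Finset (Sym2 V)} {F' : Finset (Sym2 W)}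
    (β : V ≃ W)
    (hβ : ∀ x y, (SimpleGraph.fromEdgeSet (F : Set (Sym2 V))).Reachable x y ↔
      (SimpleGraph.fromEdgeSet (F' : Set (Sym2 W))).Reachable (β x) (β y))
    (hcard : F.card = F'.card) (J : Finset (V × Bool)) (P : Finset (Fin 3)) :
    ((enc F J P).card,
        componentOrders (SimpleGraph.fromEdgeSet
          ((enc F J P : Finset (Sym2 (V ⊕ Fin 4))) : Set (Sym2 (V ⊕ Fin 4)))))
      = ((enc F' (J.image (Prod.map β id)) P).card,
        componentOrders (SimpleGraph.fromEdgeSet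
          ((enc F' (J.image (Prod.map β id)) P : Finset (Sym2 (W ⊕ Fin 4))) :
            Set (Sym2 (W ⊕ Fin 4))))) := by
  have hJcard : (J.image (Prod.map β id)).card = J.card := by
    refine Finset.card_image_of_injective _ ?_
    rintro ⟨a1, b1⟩ ⟨a2, b2⟩ hpq
    simp only [Prod.map, Prod.mk.injEq, id] at hpq
    exact Prod.ext (β.injective hpq.1) hpq.2
  have hback : ∀ x y, (SimpleGraph.fromEdgeSet (F' : Set (Sym2 W))).Reachable x y →
      (SimpleGraph.fromEdgeSet (F : Set (Sym2 V))).Reachable (β.symm x) (β.symm y) := by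
    intro x y hxy
    refine (hβ (β.symm x) (β.symm y)).2 ?_
    rwa [Equiv.apply_symm_apply, Equiv.apply_symm_apply]
  have hJback : (J.image (Prod.map β id)).image (Prod.map β.symm id) = J := by
    rw [Finset.image_image]
    have : (Prod.map ⇑β.symm (id : Bool → Bool)) ∘ (Prod.map ⇑β (id : Bool → Bool)) = id := by
      funext q
      cases q with
      | mk a b => simp
    rw [this, Finset.image_id]
  have hcancel : ∀ z : V ⊕ Fin 4, Sum.map β.symm id (Sum.map β id z) = z := by
    intro z; cases z <;> simp
  refine Prod.ext ?_ ?_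
  · simp only [card_enc, hJcard, hcard]
  · refine componentOrders_congr (Equiv.sumCongr β (Equiv.refl (Fin 4))) ?_
    intro x y
    constructor
    · intro hr
      exact enc_reach β (fun a b hab => (hβ a b).1 hab) J P x y hr
    · intro hr
      have h2 := enc_reach β.symm hback (J.image (Prod.map β id)) P _ _ hr
      rw [hJback] at h2
      have hx := hcancel x
      have hy := hcancel y
      have hx' : Sum.map β.symm id ((Equiv.sumCongr β (Equiv.refl (Fin 4))) x) = x := hx
      have hy' : Sum.map β.symm id ((Equiv.sumCongr β (Equiv.refl (Fin 4))) y) = y := hy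
      rwa [hx', hy'] at h2

lemma bind_congr_of_rel {α β γ : Type*} {r : α → β → Prop} {s : Multiset α} {t : Multiset β}
    (hst : Multiset.Rel r s t) (u : α → Multiset γ) (v : β → Multiset γ)
    (huv : ∀ a b, r a b → u a = v b) : s.bind u = t.bind v := by
  induction hst with
  | zero => rfl
  | @cons a b s' t' hab hst' ih => rw [Multiset.cons_bind, Multiset.cons_bind, huv a b hab, ih]

lemma prod_map_bind {α ι γ : Type*} (A : Finset α) (B : Finset ι) (g : α × ι → γ) :
    (A ×ˢ B).val.map g = A.val.bind (fun a => B.val.map (fun b => g (a, b))) := by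
  rw [Finset.product_val]
  show Multiset.map g (A.val.bind fun a => B.val.map (Prod.mk a)) = _
  rw [Multiset.map_bind]
  congr 1
  funext a
  rw [Multiset.map_map]
  rfl

end Aux

/-- If `s(G) = s(H)` then `s(Ĝ) = s(Ĥ)`. -/
theorem stmt_6 {V W : Type*} [Fintype V] [Fintype W]
    (G : SimpleGraph V) (H : SimpleGraph W)
    (h : subgraphSeq G = subgraphSeq H) :
    subgraphSeq (hatGraph G) = subgraphSeq (hatGraph H) := by
  have hrel : Multiset.Rel (fun (F : Finset (Sym2 V)) (F' : Finset (Sym2 W)) =>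
      (F.card, componentOrders (SimpleGraph.fromEdgeSet (F : Set (Sym2 V))))
        = (F'.card, componentOrders (SimpleGraph.fromEdgeSet (F' : Set (Sym2 W)))))
      G.edgeFinset.powerset.val H.edgeFinset.powerset.val := by
    rw [← Multiset.rel_map (p := (· = ·))
      (f := fun (F : Finset (Sym2 V)) =>
        (F.card, componentOrders (SimpleGraph.fromEdgeSet (F : Set (Sym2 V)))))
      (g := fun (F' : Finset (Sym2 W)) =>
        (F'.card, componentOrders (SimpleGraph.fromEdgeSet (F' : Set (Sym2 W))))),
      Multiset.rel_eq]
    exact h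
  unfold subgraphSeq
  rw [pow_hat_map G, pow_hat_map H, prod_map_bind, prod_map_bind]
  refine bind_congr_of_rel hrel _ _ ?_
  intro F F' hFF'
  have hcard : F.card = F'.card := congrArg Prod.fst hFF'
  have horders : componentOrders (SimpleGraph.fromEdgeSet (F : Set (Sym2 V)))
      = componentOrders (SimpleGraph.fromEdgeSet (F' : Set (Sym2 W))) :=
    congrArg Prod.snd hFF'
  obtain ⟨β, hβ⟩ := exists_beta horders
  have step1 : (Finset.univ : Finset (Finset (V × Bool) × Finset (Fin 3))).val.map
        (fun q => ((enc F q.1 q.2).card,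
          componentOrders (SimpleGraph.fromEdgeSet
            ((enc F q.1 q.2 : Finset (Sym2 (V ⊕ Fin 4))) : Set (Sym2 (V ⊕ Fin 4))))))
      = (Finset.univ : Finset (Finset (V × Bool) × Finset (Fin 3))).val.map
        (fun q => ((enc F' (q.1.image (Prod.map β id)) q.2).card,
          componentOrders (SimpleGraph.fromEdgeSet
            ((enc F' (q.1.image (Prod.map β id)) q.2 : Finset (Sym2 (W ⊕ Fin 4))) :
              Set (Sym2 (W ⊕ Fin 4)))))) := by
    refine Multiset.map_congr rfl ?_
    intro q _
    exact desc_enc_transfer β hβ hcard q.1 q.2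
  let E : Finset (V × Bool) × Finset (Fin 3) ≃ Finset (W × Bool) × Finset (Fin 3) :=
    Equiv.prodCongr ((Equiv.prodCongr β (Equiv.refl Bool)).finsetCongr)
      (Equiv.refl (Finset (Fin 3)))
  have hE : ∀ q : Finset (V × Bool) × Finset (Fin 3),
      E q = (q.1.image (Prod.map β id), q.2) := by
    intro q
    have h1 : (E q).1 = q.1.image (Prod.map β id) := by
      show (Equiv.prodCongr β (Equiv.refl Bool)).finsetCongr q.1 = _
      rw [Equiv.finsetCongr_apply, Finset.map_eq_image]
      rfl
    have h2 : (E q).2 = q.2 := rfl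
    rw [← h1, ← h2]
  have step2 : (Finset.univ : Finset (Finset (V × Bool) × Finset (Fin 3))).val.map
        (fun q => ((enc F' (q.1.image (Prod.map β id)) q.2).card,
          componentOrders (SimpleGraph.fromEdgeSet
            ((enc F' (q.1.image (Prod.map β id)) q.2 : Finset (Sym2 (W ⊕ Fin 4))) :
              Set (Sym2 (W ⊕ Fin 4))))))
      = (Finset.univ : Finset (Finset (W × Bool) × Finset (Fin 3))).val.map
        (fun q => ((enc F' q.1 q.2).card,
          componentOrders (SimpleGraph.fromEdgeSet
            ((enc F' q.1 q.2 : Finset (Sym2 (W ⊕ Fin 4))) : Set (Sym2 (W ⊕ Fin 4)))))) := by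
    rw [← univ_val_map_equiv E, Multiset.map_map]
    refine Multiset.map_congr rfl ?_
    intro q _
    simp only [Function.comp_apply, hE q]
  exact step1.trans step2
end

section
/- Let G and H be finite simple graphs with the same number of vertices such that s(G) = s(H). Then G and H have the same Tutte polynomial, i.e., for all real numbers x and y, Σ_{F ⊆ E(G)} (x−1)^{c_G(F)−c_G(E(G))}·(y−1)^{c_G(F)+|F|−|V(G)|} = Σ_{F ⊆ E(H)} (x−1)^{c_H(F)−c_H(E(H))}·(y−1)^{c_H(F)+|F|−|V(H)|}. -/
open SimpleGraph

open scoped Classical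

/-- `c(F)`: the number of connected components of the spanning subgraph `(V, F)`. -/

noncomputable def numComponents {V : Type*} [Fintype V] (F : Finset (Sym2 V)) : ℕ :=
  Nat.card (SimpleGraph.fromEdgeSet (F : Set (Sym2 V))).ConnectedComponent

/-- The Tutte polynomial of `G`, evaluated at `(x, y)`:
`T_G(x,y) = Σ_{F ⊆ E(G)} (x−1)^(c(F)−c(E)) * (y−1)^(c(F)+|F|−|V|)`. -/

noncomputable def tutte {V : Type*} [Fintype V] (G : SimpleGraph V) (x y : ℝ) : ℝ :=
  ∑ F ∈ G.edgeFinset.powerset,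
    (x - 1) ^ (numComponents F - numComponents G.edgeFinset) *
      (y - 1) ^ (numComponents F + F.card - Fintype.card V)

/-! Each summand of `T_G` depends on `F` only through `|F|` and `c(F)`, both of which are
recorded in the description of `F`. The remaining quantity `c(E(G))` is also determined by
`s(G)`: `F = E(G)` is the only edge subset whose description has the largest edge count. -/

lemma card_componentOrders {V : Type*} [Fintype V] (G : SimpleGraph V) :
    (componentOrders G).card = Nat.card G.ConnectedComponent := by
  have hsurj : Function.Surjective G.connectedComponentMk := fun c => c.exists_rep
  have himage : (Finset.univ.val.map G.connectedComponentMk).dedup = Finset.univ.val :=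
    congrArg Finset.val (Finset.image_univ_of_surjective hsurj)
  rw [componentOrders, Multiset.card_map, himage, Nat.card_eq_fintype_card]
  rfl

noncomputable def topComponents (s : Multiset (ℕ × Multiset ℕ)) : ℕ :=
  ((s.filter fun p => p.1 = (s.map Prod.fst).sup).map fun p => p.2.card).sum

noncomputable def subgraphSeqTutte (s : Multiset (ℕ × Multiset ℕ)) (n : ℕ) (x y : ℝ) : ℝ :=
  (s.map fun p => (x - 1) ^ (p.2.card - topComponents s) * (y - 1) ^ (p.2.card + p.1 - n)).sum

section

variable {V : Type*} [Fintype V] (G : SimpleGraph V)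

lemma sup_fst_subgraphSeq : ((subgraphSeq G).map Prod.fst).sup = G.edgeFinset.card := by
  apply le_antisymm
  · rw [Multiset.sup_le]
    simp only [subgraphSeq, Multiset.map_map, Function.comp_apply, Multiset.mem_map,
      Finset.mem_val, Finset.mem_powerset, forall_exists_index, and_imp]
    rintro _ F hF rfl
    exact Finset.card_le_card hF
  · apply Multiset.le_sup
    simp only [subgraphSeq, Multiset.map_map, Function.comp_apply, Multiset.mem_map,
      Finset.mem_val, Finset.mem_powerset]
    exact ⟨G.edgeFinset, subset_rfl, rfl⟩

lemma topComponents_subgraphSeq :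
    topComponents (subgraphSeq G) = numComponents G.edgeFinset := by
  have hfilter : G.edgeFinset.powerset.filter (fun F => F.card = G.edgeFinset.card) =
      {G.edgeFinset} := by
    ext F
    simp only [Finset.mem_filter, Finset.mem_powerset, Finset.mem_singleton]
    exact ⟨fun ⟨hsub, hcard⟩ => Finset.eq_of_subset_of_card_le hsub hcard.ge,
      fun hF => hF ▸ ⟨subset_rfl, rfl⟩⟩
  rw [topComponents, sup_fst_subgraphSeq, subgraphSeq, Multiset.filter_map, Multiset.map_map]
  change ((G.edgeFinset.powerset.filter fun F => F.card = G.edgeFinset.card).val.map _).sum = _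
  rw [hfilter]
  exact card_componentOrders _

lemma tutte_eq_subgraphSeqTutte (x y : ℝ) :
    tutte G x y = subgraphSeqTutte (subgraphSeq G) (Fintype.card V) x y := by
  rw [subgraphSeqTutte, topComponents_subgraphSeq, subgraphSeq, Multiset.map_map, _root_.tutte,
    Finset.sum_eq_multiset_sum]
  congr 1
  refine Multiset.map_congr rfl fun F _ => ?_
  simp only [Function.comp_apply, card_componentOrders, numComponents]

end

/-- Two graphs with the same number of vertices and the same subgraph sequence have the
same Tutte polynomial. -/
theorem stmt_7 {V W : Type*} [Fintype V] [Fintype W]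
    (G : SimpleGraph V) (H : SimpleGraph W)
    (hcard : Fintype.card V = Fintype.card W)
    (h : subgraphSeq G = subgraphSeq H) :
    ∀ x y : ℝ, tutte G x y = tutte H x y := by
  intro x y
  rw [tutte_eq_subgraphSeqTutte, tutte_eq_subgraphSeqTutte, h, hcard]
end
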